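/- Let M be a loop-free matroid on a linearly ordered ground set. Every broken circuit of M contains a minimal broken circuit of the form C \ min(C) where the circuit C satisfies min(C) = min(cl(C)). Consequently, a set X is an NBC set iff X contains no broken circuit C \ min(C) with C ranging only over circuits with min(C) = min(cl(C \ min(C)) ∪ {min C}). -/

import Mathlib

open Set

/-- A circuit of a matroid: a minimal dependent set. -/
def IsCircuit {α : Type*} (M : Matroid α) (C : Set α) : Prop :=
  M.Dep C ∧ ∀ D, D ⊂ C → ¬ M.Dep D

/-- A broken circuit: a circuit `C` with `|C| > 1` with its minimum element removed. -/
def BrokenCircuit {α : Type*} [LinearOrder α] (M : Matroid α) (B : Set α) : Prop :=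
  ∃ C m, IsCircuit M C ∧ m ∈ C ∧ (∀ y ∈ C, m ≤ y) ∧ (C \ {m}).Nonempty ∧ B = C \ {m}

/-- A no-broken-circuit (NBC) set: an independent set containing no broken circuit. -/
def NBC {α : Type*} [LinearOrder α] (M : Matroid α) (X : Set α) : Prop :=
  M.Indep X ∧ ∀ B, BrokenCircuit M B → ¬ B ⊆ X

/-!
Let `B` be an inclusion-minimal broken circuit inside the given one and `y` the least element of
`cl B`. Writing `B = C \ {m}`, we have `m ∈ cl B`, so `y ≤ m < B`; hence `y ∉ B` and a circuit
through `y` inside `insert y B` has minimum `y`. Its broken circuit lies in `B`, so by minimality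
it is `B` itself, and its closure is `cl B`, whose minimum is `y`.
-/

section

variable {α : Type*}

lemma isCircuit_iff_matroid_isCircuit {M : Matroid α} {C : Set α} :
    IsCircuit M C ↔ M.IsCircuit C :=
  minimal_iff_forall_ssubset.symm

lemma Matroid.IsCircuit.sdiff_singleton_nonempty {M : Matroid α} {C : Set α} {m : α}
    (hloopfree : ∀ x ∈ M.E, M.Indep {x}) (hC : M.IsCircuit C) (hm : m ∈ C) :
    (C \ {m}).Nonempty := by
  rw [nonempty_iff_ne_empty, Ne, sdiff_eq_empty]
  exact fun hCm ↦ hC.dep.not_indep ((hloopfree m (hC.subset_ground hm)).subset hCm)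

section LinearOrder

variable [LinearOrder α] {M : Matroid α} {B C I : Set α} {m y : α}

lemma BrokenCircuit.subset_ground (hB : BrokenCircuit M B) : B ⊆ M.E := by
  obtain ⟨C, m, hC, -, -, -, rfl⟩ := hB
  exact sdiff_subset.trans hC.1.subset_ground

lemma BrokenCircuit.nonempty (hB : BrokenCircuit M B) : B.Nonempty := by
  obtain ⟨C, m, -, -, -, hne, rfl⟩ := hB
  exact hne

lemma brokenCircuit_sdiff_singleton (hloopfree : ∀ x ∈ M.E, M.Indep {x}) (hC : IsCircuit M C)
    (hm : m ∈ C) (hmin : ∀ y ∈ C, m ≤ y) : BrokenCircuit M (C \ {m}) :=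
  ⟨C, m, hC, hm, hmin,
    (isCircuit_iff_matroid_isCircuit.1 hC).sdiff_singleton_nonempty hloopfree hm, rfl⟩

lemma BrokenCircuit.exists_minimal_subset (hE : M.E.Finite) (hB : BrokenCircuit M B) :
    ∃ B₀ ⊆ B, Minimal (BrokenCircuit M) B₀ :=
  (hE.finite_subsets.subset fun _ ↦ BrokenCircuit.subset_ground).exists_le_minimal hB

lemma exists_isCircuit_min_of_mem_closure (hy : y ∈ M.closure I) (hyI : y ∉ I)
    (hyle : ∀ z ∈ I, y ≤ z) :
    ∃ C, IsCircuit M C ∧ y ∈ C ∧ (∀ z ∈ C, y ≤ z) ∧ C \ {y} ⊆ I := by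
  obtain ⟨C, hCI, hC, hyC⟩ := M.exists_isCircuit_of_mem_closure hy hyI
  refine ⟨C, isCircuit_iff_matroid_isCircuit.2 hC, hyC, fun z hz ↦ ?_,
    sdiff_singleton_subset_iff.2 hCI⟩
  rcases hCI hz with rfl | hzI
  · exact le_rfl
  · exact hyle z hzI

lemma Minimal.exists_isCircuit_min_closure (hE : M.E.Finite)
    (hloopfree : ∀ x ∈ M.E, M.Indep {x}) (hB : Minimal (BrokenCircuit M) B) :
    ∃ C m, IsCircuit M C ∧ m ∈ C ∧ (∀ y ∈ C, m ≤ y) ∧ (∀ y ∈ M.closure C, m ≤ y) ∧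
      C \ {m} = B := by
  obtain ⟨C₀, m₀, hC₀, hm₀, hm₀min, -, rfl⟩ := hB.prop
  obtain ⟨y, hycl, hymin⟩ := exists_min_image (M.closure (C₀ \ {m₀})) id
    (hE.subset (M.closure_subset_ground _))
    (hB.prop.nonempty.mono (M.subset_closure _ hB.prop.subset_ground))
  have hm₀cl : m₀ ∈ M.closure (C₀ \ {m₀}) :=
    (isCircuit_iff_matroid_isCircuit.1 hC₀).mem_closure_sdiff_singleton_of_mem hm₀
  have hy_lt : ∀ z ∈ C₀ \ {m₀}, y < z := fun z hz ↦
    (hymin m₀ hm₀cl).trans_lt ((hm₀min z hz.1).lt_of_ne (Ne.symm hz.2))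
  obtain ⟨C, hC, hyC, hCmin, hCB⟩ := exists_isCircuit_min_of_mem_closure hycl
    (fun hyB ↦ (hy_lt y hyB).false) (fun z hz ↦ (hy_lt z hz).le)
  have hCeq : C \ {y} = C₀ \ {m₀} :=
    hB.eq_of_subset (brokenCircuit_sdiff_singleton hloopfree hC hyC hCmin) hCB
  refine ⟨C, y, hC, hyC, hCmin, fun z hz ↦ hymin z ?_, hCeq⟩
  rwa [← (isCircuit_iff_matroid_isCircuit.1 hC).closure_sdiff_singleton_eq y, hCeq] at hz

lemma BrokenCircuit.exists_min_closure_subset (hE : M.E.Finite)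
    (hloopfree : ∀ x ∈ M.E, M.Indep {x}) (hB : BrokenCircuit M B) :
    ∃ C m, IsCircuit M C ∧ m ∈ C ∧ (∀ y ∈ C, m ≤ y) ∧ (∀ y ∈ M.closure C, m ≤ y) ∧
      C \ {m} ⊆ B ∧
      ∀ C' m', IsCircuit M C' → m' ∈ C' → (∀ y ∈ C', m' ≤ y) →
        (∀ y ∈ M.closure C', m' ≤ y) → C' \ {m'} ⊆ C \ {m} → C' \ {m'} = C \ {m} := by
  obtain ⟨B₀, hB₀B, hB₀⟩ := hB.exists_minimal_subset hE
  obtain ⟨C, m, hC, hm, hmin, hclmin, rfl⟩ := hB₀.exists_isCircuit_min_closure hE hloopfree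
  exact ⟨C, m, hC, hm, hmin, hclmin, hB₀B, fun C' m' hC' hm' hmin' _ hsub ↦
    hB₀.eq_of_subset (brokenCircuit_sdiff_singleton hloopfree hC' hm' hmin') hsub⟩

end LinearOrder

end

/-- In a loop-free matroid on a linearly ordered finite ground set, every broken
circuit contains an inclusion-minimal broken circuit `C \ min C` coming from a
circuit `C` with `min C = min (cl C)`.  Consequently, a set `X ⊆ M.E` contains no
broken circuit iff it contains no broken circuit `C \ min C` with `C` ranging only
over circuits satisfying `min C = min (cl C)`. -/
theorem broken_circuit_reduction {α : Type*} [LinearOrder α] (M : Matroid α)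
    (hE : M.E.Finite) (hloopfree : ∀ x ∈ M.E, M.Indep {x}) :
    (∀ B, BrokenCircuit M B → ∃ C m, IsCircuit M C ∧ m ∈ C ∧ (∀ y ∈ C, m ≤ y) ∧
      (∀ y ∈ M.closure C, m ≤ y) ∧ C \ {m} ⊆ B ∧
      ∀ C' m', IsCircuit M C' → m' ∈ C' → (∀ y ∈ C', m' ≤ y) →
        (∀ y ∈ M.closure C', m' ≤ y) → C' \ {m'} ⊆ C \ {m} → C' \ {m'} = C \ {m}) ∧
    ∀ X ⊆ M.E, ((∀ B, BrokenCircuit M B → ¬ B ⊆ X) ↔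
      ∀ C m, IsCircuit M C → m ∈ C → (∀ y ∈ C, m ≤ y) → (∀ y ∈ M.closure C, m ≤ y) →
        ¬ (C \ {m} ⊆ X)) := by
  refine ⟨fun B hB ↦ hB.exists_min_closure_subset hE hloopfree, fun X _ ↦ ⟨?_, ?_⟩⟩
  · exact fun h C m hC hm hmin _ ↦ h _ (brokenCircuit_sdiff_singleton hloopfree hC hm hmin)
  intro h B hB hBX
  obtain ⟨C, m, hC, hm, hmin, hclmin, hCB, -⟩ := hB.exists_min_closure_subset hE hloopfree
  exact h C m hC hm hmin hclmin (hCB.trans hBX)
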